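/- Let n be a nonnegative integer, and let (k0,k1), (l0,l1), (l̃0,l̃1) be pairs of nonnegative integers each summing to n. Let m̄ be a 2x2 nonnegative integer array with row sums (k0,k1) and column sums (l0,l1), and let m̃ be a 2x2 nonnegative integer array with row sums (l0,l1) and column sums (l̃0,l̃1). Then the sum over all 2x2x2 nonnegative integer arrays p = (p_{ijc}) satisfying Σ_c p_{acb} = m̄_{ab} and Σ_c p_{cba} = m̃_{ab} for all a,b, of the product over (a,b) of sqrt( binomial(m̄_{ab}, p_{a0b}) * binomial(m̃_{ab}, p_{0ba}) ), equals sqrt( Π_a binomial(l_a, m̃_{a0}) * Π_b binomial(l_b, m̄_{0b}) ). -/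

import Mathlib

open Finset

/-- 2x2x2 nonnegative integer cubes `p` (entries bounded by `n`) whose projections
along two of the axes are the prescribed squares `mbar` and `mtil`:
`Σ_c p_{acb} = mbar_{ab}` and `Σ_c p_{cba} = mtil_{ab}`. -/
def cubes (n : ℕ) (mbar mtil : Fin 2 → Fin 2 → ℕ) :
    Finset (Fin 2 → Fin 2 → Fin 2 → ℕ) :=
  (Fintype.piFinset fun _ : Fin 2 => Fintype.piFinset fun _ : Fin 2 =>
      Fintype.piFinset fun _ : Fin 2 => Finset.range (n + 1)).filter
    (fun p => ∀ a b : Fin 2,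
      p a 0 b + p a 1 b = mbar a b ∧ p 0 b a + p 1 b a = mtil a b)

lemma key_id (L m0 m1 s t j : ℕ) (hm : m0 + m1 = L) (hs : s + t = L)
    (h1 : j ≤ m0) (h2 : j ≤ s) (h3 : s ≤ m1 + j) :
    m0.choose j * m1.choose (s - j) * L.choose m0
      = s.choose j * t.choose (m0 - j) * L.choose s := by
  have h4 : s - j ≤ m1 := by omega
  have h5 : m0 - j ≤ t := by omega
  have h6 : m0 ≤ L := by omega
  have h7 : s ≤ L := by omega
  have main : ((m0.choose j : ℚ) * m1.choose (s - j)) * L.choose m0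
      = (s.choose j * t.choose (m0 - j)) * L.choose s := by
    rw [Nat.cast_choose ℚ h1, Nat.cast_choose ℚ h4, Nat.cast_choose ℚ h6,
        Nat.cast_choose ℚ h2, Nat.cast_choose ℚ h5, Nat.cast_choose ℚ h7]
    have e1 : m1 - (s - j) = t - (m0 - j) := by omega
    have e2 : L - m0 = m1 := by omega
    have e3 : L - s = t := by omega
    rw [e1, e2, e3]
    have f1 : ((Nat.factorial j) : ℚ) ≠ 0 := by exact_mod_cast (Nat.factorial_pos _).ne'
    have f2 : ((Nat.factorial (m0 - j)) : ℚ) ≠ 0 := by exact_mod_cast (Nat.factorial_pos _).ne'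
    have f3 : ((Nat.factorial (s - j)) : ℚ) ≠ 0 := by exact_mod_cast (Nat.factorial_pos _).ne'
    have f4 : ((Nat.factorial (t - (m0 - j))) : ℚ) ≠ 0 := by exact_mod_cast (Nat.factorial_pos _).ne'
    have f5 : ((Nat.factorial m0) : ℚ) ≠ 0 := by exact_mod_cast (Nat.factorial_pos _).ne'
    have f6 : ((Nat.factorial m1) : ℚ) ≠ 0 := by exact_mod_cast (Nat.factorial_pos _).ne'
    have f7 : ((Nat.factorial s) : ℚ) ≠ 0 := by exact_mod_cast (Nat.factorial_pos _).ne'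
    have f8 : ((Nat.factorial t) : ℚ) ≠ 0 := by exact_mod_cast (Nat.factorial_pos _).ne'
    field_simp
  exact_mod_cast main

lemma col_sum (n L m0 m1 s t : ℕ) (hm : m0 + m1 = L) (hs : s + t = L) (hLn : L ≤ n) :
    ∑ j ∈ (Finset.range (n + 1)).filter (fun j => j ≤ m0 ∧ j ≤ s ∧ s ≤ m1 + j),
      (Real.sqrt (m0.choose j) * Real.sqrt (m1.choose (s - j)) *
        (Real.sqrt (s.choose j) * Real.sqrt (t.choose (m0 - j))))
      = Real.sqrt (L.choose s) * Real.sqrt (L.choose m0) := by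
  have hcs : 0 < L.choose s := Nat.choose_pos (by omega)
  have hcm : 0 < L.choose m0 := Nat.choose_pos (by omega)
  have hR : (0:ℝ) < Real.sqrt (L.choose s) * Real.sqrt (L.choose m0) := by
    apply mul_pos <;> { rw [Real.sqrt_pos]; exact_mod_cast ‹0 < _› }
  apply mul_right_cancel₀ hR.ne'
  rw [Finset.sum_mul]
  have hterm : ∀ j ∈ (Finset.range (n + 1)).filter (fun j => j ≤ m0 ∧ j ≤ s ∧ s ≤ m1 + j),
      (Real.sqrt (m0.choose j) * Real.sqrt (m1.choose (s - j)) *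
        (Real.sqrt (s.choose j) * Real.sqrt (t.choose (m0 - j)))) *
        (Real.sqrt (L.choose s) * Real.sqrt (L.choose m0))
      = ((m0.choose j * m1.choose (s - j) * L.choose m0 : ℕ) : ℝ) := by
    intro j hj
    simp only [Finset.mem_filter, Finset.mem_range] at hj
    obtain ⟨hjn, h1, h2, h3⟩ := hj
    have hk : m0.choose j * m1.choose (s - j) * L.choose m0
        = s.choose j * t.choose (m0 - j) * L.choose s := key_id L m0 m1 s t j hm hs h1 h2 h3
    have expand : (Real.sqrt (m0.choose j) * Real.sqrt (m1.choose (s - j)) *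
        (Real.sqrt (s.choose j) * Real.sqrt (t.choose (m0 - j)))) *
        (Real.sqrt (L.choose s) * Real.sqrt (L.choose m0))
        = Real.sqrt ((m0.choose j * m1.choose (s - j) * L.choose m0 : ℕ))
          * Real.sqrt ((s.choose j * t.choose (m0 - j) * L.choose s : ℕ)) := by
      push_cast
      rw [Real.sqrt_mul (by positivity), Real.sqrt_mul (by positivity),
          Real.sqrt_mul (by positivity), Real.sqrt_mul (by positivity)]
      ring
    rw [expand, hk]
    exact Real.mul_self_sqrt (Nat.cast_nonneg _)
  rw [Finset.sum_congr rfl hterm]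
  have hv : ∑ j ∈ (Finset.range (n + 1)).filter (fun j => j ≤ m0 ∧ j ≤ s ∧ s ≤ m1 + j),
      m0.choose j * m1.choose (s - j) = L.choose s := by
    rw [← hm, Nat.add_choose_eq,
        Finset.Nat.sum_antidiagonal_eq_sum_range_succ (fun i j => m0.choose i * m1.choose j)]
    apply Finset.sum_subset
    · intro j hj
      simp only [Finset.mem_filter, Finset.mem_range] at *
      omega
    · intro j hj hnj
      simp only [Finset.mem_filter, Finset.mem_range] at hj hnj
      by_cases hc : j ≤ m0
      · have : m1 < s - j := by omega
        rw [Nat.choose_eq_zero_of_lt this, mul_zero]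
      · rw [Nat.choose_eq_zero_of_lt (by omega), zero_mul]
  calc ∑ j ∈ (Finset.range (n + 1)).filter (fun j => j ≤ m0 ∧ j ≤ s ∧ s ≤ m1 + j),
        ((m0.choose j * m1.choose (s - j) * L.choose m0 : ℕ) : ℝ)
      = (((∑ j ∈ (Finset.range (n + 1)).filter (fun j => j ≤ m0 ∧ j ≤ s ∧ s ≤ m1 + j),
          m0.choose j * m1.choose (s - j)) * L.choose m0 : ℕ) : ℝ) := by
        push_cast [Finset.sum_mul]; ring
    _ = ((L.choose s * L.choose m0 : ℕ) : ℝ) := by rw [hv]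
    _ = Real.sqrt (L.choose s) * Real.sqrt (L.choose m0) *
          (Real.sqrt (L.choose s) * Real.sqrt (L.choose m0)) := by
        push_cast
        rw [← Real.mul_self_sqrt (by positivity : (0:ℝ) ≤ (L.choose s : ℝ) * (L.choose m0 : ℝ)),
            Real.sqrt_mul (by positivity)]

lemma sqrt_nat_mul (x y : ℕ) : Real.sqrt ((x * y : ℕ)) = Real.sqrt x * Real.sqrt y := by
  push_cast
  exact Real.sqrt_mul (Nat.cast_nonneg _) _

def tset (n : ℕ) (mbar mtil : Fin 2 → Fin 2 → ℕ) (c : Fin 2) : Finset ℕ :=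
  (Finset.range (n + 1)).filter (fun j => j ≤ mbar 0 c ∧ j ≤ mtil c 0 ∧ mtil c 0 ≤ mbar 1 c + j)

noncomputable def ff (mbar mtil : Fin 2 → Fin 2 → ℕ) (c : Fin 2) (j : ℕ) : ℝ :=
  Real.sqrt ((mbar 0 c).choose j) * Real.sqrt ((mbar 1 c).choose (mtil c 0 - j)) *
    (Real.sqrt ((mtil c 0).choose j) * Real.sqrt ((mtil c 1).choose (mbar 0 c - j)))

def jm (mbar mtil : Fin 2 → Fin 2 → ℕ) (q : Fin 2 → ℕ) : Fin 2 → Fin 2 → Fin 2 → ℕ :=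
  fun a i b => if i = 0 then (if a = 0 then q b else mtil b 0 - q b)
    else (if a = 0 then mbar 0 b - q b else mbar 1 b - (mtil b 0 - q b))

/-- Lemma 3 (cube-splitting identity):
`Σ_{p(m̄,m̃)} Π_{ab} sqrt( C(m̄_{ab}, p_{a0b}) C(m̃_{ab}, p_{0ba}) )
  = sqrt( Π_a C(l_a, m̃_{a0}) * Π_b C(l_b, m̄_{0b}) )`. -/
theorem stmt_9 (n : ℕ) (k l lt : Fin 2 → ℕ)
    (hk : k 0 + k 1 = n) (hl : l 0 + l 1 = n) (hlt : lt 0 + lt 1 = n)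
    (mbar mtil : Fin 2 → Fin 2 → ℕ)
    (hbarrow : ∀ a, mbar a 0 + mbar a 1 = k a)
    (hbarcol : ∀ b, mbar 0 b + mbar 1 b = l b)
    (htilrow : ∀ a, mtil a 0 + mtil a 1 = l a)
    (htilcol : ∀ b, mtil 0 b + mtil 1 b = lt b) :
    ∑ p ∈ cubes n mbar mtil, ∏ a : Fin 2, ∏ b : Fin 2,
        Real.sqrt ((Nat.choose (mbar a b) (p a 0 b) *
          Nat.choose (mtil a b) (p 0 b a) : ℕ))
      = Real.sqrt (((∏ a : Fin 2, Nat.choose (l a) (mtil a 0)) *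
          ∏ b : Fin 2, Nat.choose (l b) (mbar 0 b) : ℕ)) := by
  have hlb : ∀ b : Fin 2, l b ≤ n := Fin.forall_fin_two.2 ⟨by omega, by omega⟩
  have step1 : ∑ p ∈ cubes n mbar mtil, ∏ a : Fin 2, ∏ b : Fin 2,
        Real.sqrt ((Nat.choose (mbar a b) (p a 0 b) *
          Nat.choose (mtil a b) (p 0 b a) : ℕ))
      = ∑ q ∈ Fintype.piFinset (tset n mbar mtil), ∏ c : Fin 2, ff mbar mtil c (q c) := by
    refine Finset.sum_nbij' (fun p c => p 0 0 c) (jm mbar mtil) ?_ ?_ ?_ ?_ ?_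
    · intro p hp
      simp only [cubes, Finset.mem_filter, Fintype.mem_piFinset, Finset.mem_range] at hp
      obtain ⟨hbd, hcon⟩ := hp
      simp only [tset, Fintype.mem_piFinset, Finset.mem_filter, Finset.mem_range]
      intro c
      have h1 := (hcon 0 c).1
      have h2 := (hcon c 0).2
      have h3 := (hcon 1 c).1
      have h4 := hbd 0 0 c
      omega
    · intro q hq
      simp only [tset, Fintype.mem_piFinset, Finset.mem_filter, Finset.mem_range] at hq
      simp only [cubes, Finset.mem_filter, Fintype.mem_piFinset, Finset.mem_range]
      have hq0 := hq 0
      have hq1 := hq 1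
      have hb0 := hbarcol 0
      have hb1 := hbarcol 1
      have ht0 := htilrow 0
      have ht1 := htilrow 1
      have hl0 := hlb 0
      have hl1 := hlb 1
      constructor
      · simp only [Fin.forall_fin_two]
        simp [jm]
        omega
      · simp only [Fin.forall_fin_two]
        simp [jm]
        omega
    · intro p hp
      simp only [cubes, Finset.mem_filter, Fintype.mem_piFinset, Finset.mem_range] at hp
      obtain ⟨hbd, hcon⟩ := hp
      have c00 := hcon 0 0
      have c01 := hcon 0 1
      have c10 := hcon 1 0
      have c11 := hcon 1 1
      have key : ∀ a i b, jm mbar mtil (fun c => p 0 0 c) a i b = p a i b := by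
        simp only [Fin.forall_fin_two]
        simp [jm]
        omega
      funext a i b
      exact key a i b
    · intro q hq
      funext c
      simp [jm]
    · intro p hp
      simp only [cubes, Finset.mem_filter, Fintype.mem_piFinset, Finset.mem_range] at hp
      obtain ⟨hbd, hcon⟩ := hp
      have c00 := hcon 0 0
      have c01 := hcon 0 1
      have c10 := hcon 1 0
      have c11 := hcon 1 1
      have e1 : p 0 1 0 = mbar 0 0 - p 0 0 0 := by omega
      have e2 : p 1 0 0 = mtil 0 0 - p 0 0 0 := by omega
      have e3 : p 1 0 1 = mtil 1 0 - p 0 0 1 := by omega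
      have e4 : p 0 1 1 = mbar 0 1 - p 0 0 1 := by omega
      simp only [Fin.prod_univ_two, sqrt_nat_mul, ff, e1, e2, e3, e4]
      ring
  rw [step1, ← Finset.prod_univ_sum]
  have hc : ∀ c : Fin 2, ∑ j ∈ tset n mbar mtil c, ff mbar mtil c j
      = Real.sqrt ((l c).choose (mtil c 0)) * Real.sqrt ((l c).choose (mbar 0 c)) := by
    intro c
    exact col_sum n (l c) (mbar 0 c) (mbar 1 c) (mtil c 0) (mtil c 1)
      (hbarcol c) (htilrow c) (hlb c)
  rw [Fin.prod_univ_two, hc 0, hc 1]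
  simp only [Fin.prod_univ_two, sqrt_nat_mul]
  ring
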